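/- Counterexample to Quigley's Lemma 5.18 for k = 4: with distinct variables a₁,…,a₅, let A = (a₁ ∨ a₂ ∨ a₅), B = (a₃ ∨ a₄ ∨ ¬a₅), C = (¬a₁ ∨ a₃ ∨ a₄), D = (a₁ ∨ a₂ ∨ a₃ ∨ a₄), E = (¬a₁ ∨ a₂ ∨ a₃ ∨ a₄), F = (a₂ ∨ a₃ ∨ a₄). Then A,B resolve on a₅ to D; E = C ∪ {a₂} is an expansion of C; D,E resolve on a₁ to F; but every tautology-free resolvent of two clauses from {A, B, C} has length at least 4, so F cannot be derived from A, B, C processing only clauses of length at most 3. -/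
import Mathlib

set_option maxRecDepth 10000


def resolventClause {V : Type*} [DecidableEq V] (C D : Finset (V × Bool)) (t : V) :
    Finset (V × Bool) :=
  C.erase (t, true) ∪ D.erase (t, false)

/-- Clauses derivable from the initial set `S` by resolution and expansion steps,
where every derived clause must have length at most `bound`. -/
inductive Derive {V : Type*} [DecidableEq V] (S : Finset (V × Bool) → Prop) (bound : ℕ) :
    Finset (V × Bool) → Prop
  | base (C : Finset (V × Bool)) : S C → Derive S bound C
  | res (C D : Finset (V × Bool)) (t : V) :
      Derive S bound C → Derive S bound D →
      (t, true) ∈ C → (t, false) ∈ D →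
      (resolventClause C D t).card ≤ bound → Derive S bound (resolventClause C D t)
  | exp (C : Finset (V × Bool)) (l : V × Bool) :
      Derive S bound C → (insert l C).card ≤ bound → Derive S bound (insert l C)

private def SABC : Finset (Finset (Fin 5 × Bool)) :=
  {{(0, true), (1, true), (4, true)}, {(2, true), (3, true), (4, false)},
   {(0, false), (2, true), (3, true)}}

private lemma res_big : ∀ C ∈ SABC, ∀ D ∈ SABC, ∀ t : Fin 5,
    (t, true) ∈ C → (t, false) ∈ D → ¬ (resolventClause C D t).card ≤ 3 := by
  intro C hC D hD
  simp only [SABC, Finset.mem_insert, Finset.mem_singleton] at hC hD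
  rcases hC with rfl | rfl | rfl <;> rcases hD with rfl | rfl | rfl <;> decide

private lemma exp_small : ∀ C ∈ SABC, ∀ l : Fin 5 × Bool,
    (insert l C).card ≤ 3 → insert l C ∈ SABC := by
  intro C hC
  simp only [SABC, Finset.mem_insert, Finset.mem_singleton] at hC ⊢
  rcases hC with rfl | rfl | rfl <;> decide

private lemma closed : ∀ X, Derive (fun X => X ∈ SABC) 3 X → X ∈ SABC := by
  intro X h
  induction h with
  | base C hC => exact hC
  | res C D t _ _ ht hf hcard ihC ihD => exact absurd hcard (res_big C ihC D ihD t ht hf)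
  | exp C l _ hcard ih => exact exp_small C ih l hcard

/-- Counterexample to Quigley's Lemma 5.18 for `k = 4`, over the five distinct
variables `0,…,4` of `Fin 5` (playing the roles of `a₁,…,a₅`):
`A,B` resolve on `a₅` to `D`; `E = C ∪ {a₂}` is an expansion of `C`; `D,E` resolve on
`a₁` to `F`; but every tautology-free resolventClause of two clauses from `{A,B,C}` has
length at least `4`, and `F` cannot be derived from `A`, `B`, `C` processing only
clauses of length at most `3`. -/
theorem counterexample_lemma_5_18 :
    let A : Finset (Fin 5 × Bool) := {(0, true), (1, true), (4, true)}
    let B : Finset (Fin 5 × Bool) := {(2, true), (3, true), (4, false)}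
    let C : Finset (Fin 5 × Bool) := {(0, false), (2, true), (3, true)}
    let D : Finset (Fin 5 × Bool) := {(0, true), (1, true), (2, true), (3, true)}
    let E : Finset (Fin 5 × Bool) := {(0, false), (1, true), (2, true), (3, true)}
    let F : Finset (Fin 5 × Bool) := {(1, true), (2, true), (3, true)}
    resolventClause A B 4 = D ∧
    E = insert (1, true) C ∧
    resolventClause D E 0 = F ∧
    (∀ C₁ ∈ ({A, B, C} : Finset (Finset (Fin 5 × Bool))),
      ∀ C₂ ∈ ({A, B, C} : Finset (Finset (Fin 5 × Bool))),
        ∀ t : Fin 5, (t, true) ∈ C₁ → (t, false) ∈ C₂ →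
          (∀ v : Fin 5, ¬ ((v, true) ∈ resolventClause C₁ C₂ t ∧
              (v, false) ∈ resolventClause C₁ C₂ t)) →
            4 ≤ (resolventClause C₁ C₂ t).card) ∧
    ¬ Derive (fun X => X ∈ ({A, B, C} : Finset (Finset (Fin 5 × Bool)))) 3 F := by
  refine ⟨by decide, by decide, by decide, by decide, fun h => ?_⟩
  exact absurd (closed _ h) (by decide)
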